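/- For the cycle C_n on n ≥ 3 vertices, b_R(C_n) = 3 if n ≡ 2 (mod 3), and b_R(C_n) = 2 otherwise. -/

import Mathlib

open SimpleGraph Finset

/-- A Roman dominating function: values in {0,1,2}, every 0-vertex has a neighbor with value 2. -/
def IsRDF {V : Type*} (G : SimpleGraph V) (f : V → ℕ) : Prop :=
  (∀ v, f v ≤ 2) ∧ ∀ v, f v = 0 → ∃ u, G.Adj v u ∧ f u = 2

/-- The Roman domination number: minimum weight of a Roman dominating function. -/
noncomputable def romanDom {V : Type*} [Fintype V] (G : SimpleGraph V) : ℕ :=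
  sInf {k | ∃ f : V → ℕ, IsRDF G f ∧ ∑ v, f v = k}

/-- A dominating set. -/
def IsDomSet {V : Type*} (G : SimpleGraph V) (S : Set V) : Prop :=
  ∀ v, v ∈ S ∨ ∃ u ∈ S, G.Adj u v

/-- The domination number. -/
noncomputable def domNum {V : Type*} [Fintype V] (G : SimpleGraph V) : ℕ :=
  sInf {k | ∃ S : Set V, IsDomSet G S ∧ S.ncard = k}

/-- Degree of a vertex. -/
noncomputable def deg {V : Type*} (G : SimpleGraph V) (v : V) : ℕ :=
  (G.neighborSet v).ncard

/-- Maximum degree. -/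
noncomputable def maxDeg {V : Type*} (G : SimpleGraph V) : ℕ :=
  sSup {d | ∃ v, deg G v = d}

/-- Minimum degree. -/
noncomputable def minDeg {V : Type*} (G : SimpleGraph V) : ℕ :=
  sInf {d | ∃ v, deg G v = d}

/-- The Roman bondage number: minimum size of an edge set whose deletion increases `romanDom`. -/
noncomputable def romanBondage {V : Type*} [Fintype V] (G : SimpleGraph V) : ℕ :=
  sInf {k | ∃ B : Set (Sym2 V), B ⊆ G.edgeSet ∧
    romanDom (G.deleteEdges B) > romanDom G ∧ B.ncard = k}

/-- The bondage number: minimum size of an edge set whose deletion increases `domNum`. -/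
noncomputable def bondage {V : Type*} [Fintype V] (G : SimpleGraph V) : ℕ :=
  sInf {k | ∃ B : Set (Sym2 V), B ⊆ G.edgeSet ∧
    domNum (G.deleteEdges B) > domNum G ∧ B.ncard = k}

/-- A vertex cover. -/
def IsVC {V : Type*} (G : SimpleGraph V) (S : Set V) : Prop :=
  ∀ u v, G.Adj u v → u ∈ S ∨ v ∈ S

/-- The vertex covering number. -/
noncomputable def vcNum {V : Type*} [Fintype V] (G : SimpleGraph V) : ℕ :=
  sInf {k | ∃ S : Set V, IsVC G S ∧ S.ncard = k}


/-!
In a graph of maximum degree `2`, a vertex labelled `2` Roman-dominates at most two vertices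
labelled `0`, so every Roman dominating function has weight at least `⌈2|S|/3⌉` on each union of
components `S`; on a path this is attained by labelling every third vertex `2` (and the last
vertex `1` when it is left over). Here `⌈2m/3⌉` is written `(2 * m + 2) / 3`.

Hence `γ_R(C_n) = ⌈2n/3⌉`. Up to rotation, deleting at most two edges of `C_n` leaves two paths
`P_m` and `P_(n-m)` (with `m = n` for a single edge), and `⌈2m/3⌉ + ⌈2(n-m)/3⌉ = ⌈2n/3⌉` whenever
`m = n` or `n ≡ 2 (mod 3)`. Conversely, cutting off one `P_2` gives `2 + ⌈2(n-2)/3⌉ > ⌈2n/3⌉`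
unless `n ≡ 2 (mod 3)`, and cutting off two gives `4 + ⌈2(n-4)/3⌉ > ⌈2n/3⌉` for all `n`.
-/

lemma IsRDF.mono {V : Type*} {G H : SimpleGraph V} {f : V → ℕ} (h : G ≤ H) (hf : IsRDF G f) :
    IsRDF H f :=
  ⟨hf.1, fun v hv => (hf.2 v hv).imp fun _ hu => ⟨h hu.1, hu.2⟩⟩

def SimpleGraph.Iso.deleteEdges {V W : Type*} {G : SimpleGraph V} {G' : SimpleGraph W}
    (e : G ≃g G') (s : Set (Sym2 V)) : G.deleteEdges s ≃g G'.deleteEdges (Sym2.map e '' s) where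
  toEquiv := e.toEquiv
  map_rel_iff' {u v} := by
    rw [deleteEdges_adj, deleteEdges_adj]
    change G'.Adj (e u) (e v) ∧ s(e u, e v) ∉ Sym2.map e '' s ↔ G.Adj u v ∧ s(u, v) ∉ s
    rw [e.map_adj_iff, ← Sym2.map_mk, (Sym2.map.injective e.injective).mem_set_image]

lemma Set.exists_subset_pair_of_ncard_le_two {α : Type*} [Finite α] {s t : Set α} {a : α}
    (hst : s ⊆ t) (ha : a ∈ t) (hs : s.ncard ≤ 2) :
    ∃ x ∈ t, ∃ y ∈ t, s ⊆ {x, y} ∧ (s.ncard ≤ 1 → x = y) := by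
  rcases (by omega : s.ncard = 0 ∨ s.ncard = 1 ∨ s.ncard = 2) with h | h | h
  · rw [(Set.ncard_eq_zero (Set.toFinite s)).1 h]
    exact ⟨a, ha, a, ha, Set.empty_subset _, fun _ => rfl⟩
  · obtain ⟨x, rfl⟩ := Set.ncard_eq_one.1 h
    exact ⟨x, hst rfl, x, hst rfl, by simp, fun _ => rfl⟩
  · obtain ⟨x, y, -, rfl⟩ := Set.ncard_eq_two.1 h
    exact ⟨x, hst (by simp), y, hst (by simp), subset_rfl, by omega⟩

section RomanDomination

variable {V W : Type*} [Fintype V] [Fintype W] {G H : SimpleGraph V} {f : V → ℕ}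

lemma romanDom_le_sum (hf : IsRDF G f) : romanDom G ≤ ∑ v, f v :=
  Nat.sInf_le ⟨f, hf, rfl⟩

lemma exists_isRDF_sum_eq_romanDom (G : SimpleGraph V) :
    ∃ f : V → ℕ, IsRDF G f ∧ ∑ v, f v = romanDom G :=
  Nat.sInf_mem (s := {k | ∃ f : V → ℕ, IsRDF G f ∧ ∑ v, f v = k})
    ⟨_, fun _ => 2, ⟨fun _ => le_rfl, fun _ hv => absurd hv two_ne_zero⟩, rfl⟩

lemma romanDom_anti (h : G ≤ H) : romanDom H ≤ romanDom G := by
  obtain ⟨f, hf, hsum⟩ := exists_isRDF_sum_eq_romanDom G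
  exact hsum ▸ romanDom_le_sum (hf.mono h)

lemma romanDom_le_of_iso {G' : SimpleGraph W} (e : G ≃g G') : romanDom G ≤ romanDom G' := by
  obtain ⟨f, hf, hsum⟩ := exists_isRDF_sum_eq_romanDom G'
  refine hsum ▸ (romanDom_le_sum (f := f ∘ e) ⟨fun v => hf.1 (e v), fun v hv => ?_⟩).trans_eq
    (e.toEquiv.sum_comp f)
  obtain ⟨u, hu, h2⟩ := hf.2 (e v) hv
  exact ⟨e.symm u, e.map_adj_iff.1 (by simpa using hu), by simpa using h2⟩

lemma romanDom_congr {G' : SimpleGraph W} (e : G ≃g G') : romanDom G = romanDom G' :=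
  (romanDom_le_of_iso e).antisymm (romanDom_le_of_iso e.symm)

lemma romanBondage_eq_of {k : ℕ}
    (hwit : ∃ B ⊆ G.edgeSet, romanDom G < romanDom (G.deleteEdges B) ∧ B.ncard = k)
    (hmin : ∀ B ⊆ G.edgeSet, B.ncard < k → romanDom (G.deleteEdges B) ≤ romanDom G) :
    romanBondage G = k := by
  obtain ⟨B, hB, hlt, rfl⟩ := hwit
  have hmem : B.ncard ∈ {k | ∃ B ⊆ G.edgeSet, romanDom (G.deleteEdges B) > romanDom G ∧
      B.ncard = k} := ⟨B, hB, hlt, rfl⟩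
  refine (Nat.sInf_le hmem).antisymm (le_csInf ⟨_, hmem⟩ ?_)
  rintro _ ⟨B', hB', hlt', rfl⟩
  exact not_lt.1 fun h => (hmin B' hB' h).not_gt hlt'

end RomanDomination

def IsAdjClosed {V : Type*} (G : SimpleGraph V) (S : Finset V) : Prop :=
  ∀ ⦃v u⦄, v ∈ S → G.Adj v u → u ∈ S

lemma IsAdjClosed.sdiff {V : Type*} [DecidableEq V] {G : SimpleGraph V} {S T : Finset V}
    (hS : IsAdjClosed G S) (hT : IsAdjClosed G T) : IsAdjClosed G (S \ T) := by
  intro v u hv hvu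
  rw [mem_sdiff] at hv ⊢
  exact ⟨hS hv.1 hvu, fun hu => hv.2 (hT hu hvu.symm)⟩

lemma isAdjClosed_empty {V : Type*} (G : SimpleGraph V) : IsAdjClosed G ∅ :=
  fun _ _ hv => absurd hv (notMem_empty _)

lemma isAdjClosed_univ {V : Type*} [Fintype V] (G : SimpleGraph V) : IsAdjClosed G univ :=
  fun _ _ _ _ => mem_univ _

section DegreeBound

variable {V : Type*} [Fintype V] {G : SimpleGraph V} [DecidableRel G.Adj] {f : V → ℕ}

lemma IsRDF.two_mul_card_le {Δ : ℕ} (hΔ : 1 ≤ Δ) (hdeg : ∀ v, G.degree v ≤ Δ)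
    (hf : IsRDF G f) {S : Finset V} (hS : IsAdjClosed G S) :
    2 * #S ≤ (Δ + 1) * ∑ v ∈ S, f v := by
  classical
  have hzero : #(S.filter (f · = 0)) ≤ Δ * #(S.filter (f · = 2)) :=
    calc #(S.filter (f · = 0))
        ≤ #((S.filter (f · = 2)).biUnion (G.neighborFinset ·)) := card_le_card fun v hv => by
          obtain ⟨hvS, hv0⟩ := mem_filter.1 hv
          obtain ⟨u, hvu, hu2⟩ := hf.2 v hv0
          exact mem_biUnion.2
            ⟨u, mem_filter.2 ⟨hS hvS hvu, hu2⟩, (mem_neighborFinset _ _ _).2 hvu.symm⟩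
      _ ≤ ∑ u ∈ S.filter (f · = 2), G.degree u := card_biUnion_le
      _ ≤ ∑ _u ∈ S.filter (f · = 2), Δ := sum_le_sum fun u _ => hdeg u
      _ = Δ * #(S.filter (f · = 2)) := by rw [sum_const, smul_eq_mul, mul_comm]
  have hpoint : ∀ v ∈ S, 2 + 2 * Δ * (if f v = 2 then 1 else 0) ≤
      (Δ + 1) * f v + 2 * (if f v = 0 then 1 else 0) := fun v _ => by
    have := hf.1 v
    interval_cases f v <;> simp <;> omega
  have hsum := sum_le_sum hpoint
  simp only [sum_add_distrib, ← mul_sum, sum_const, smul_eq_mul, ← card_filter] at hsum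
  nlinarith

lemma le_romanDom_of_degree_le_two (hdeg : ∀ v, G.degree v ≤ 2) :
    (2 * Fintype.card V + 2) / 3 ≤ romanDom G := by
  obtain ⟨f, hf, hsum⟩ := exists_isRDF_sum_eq_romanDom G
  have := hf.two_mul_card_le one_le_two hdeg (isAdjClosed_univ G)
  rw [card_univ] at this
  omega

lemma IsRDF.add_sum_le_sum_of_subset (hdeg : ∀ v, G.degree v ≤ 2) (hf : IsRDF G f)
    {S T : Finset V} (hS : IsAdjClosed G S) (hT : IsAdjClosed G T) (hST : S ⊆ T) :
    (2 * (#T - #S) + 2) / 3 + ∑ v ∈ S, f v ≤ ∑ v ∈ T, f v := by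
  classical
  have := hf.two_mul_card_le one_le_two hdeg (hT.sdiff hS)
  rw [card_sdiff_of_subset hST] at this
  rw [← sum_sdiff hST]
  omega

end DegreeBound

/-- A minimum Roman dominating function of the path `0 - 1 - ⋯ - (m - 1)`. -/
def pathRDF (m j : ℕ) : ℕ :=
  if j % 3 = 1 then 2 else if j + 1 = m ∧ m % 3 = 1 then 1 else 0

lemma pathRDF_le_two (m j : ℕ) : pathRDF m j ≤ 2 := by
  unfold pathRDF; split_ifs <;> omega

lemma sum_range_pathRDF (m : ℕ) : ∑ j ∈ range m, pathRDF m j = (2 * m + 2) / 3 := by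
  have hperiodic : ∀ k, ∑ j ∈ range k, (if j % 3 = 1 then 2 else 0) = 2 * ((k + 1) / 3) := by
    intro k
    induction k with
    | zero => rfl
    | succ k ih => rw [sum_range_succ, ih]; split_ifs <;> omega
  cases m with
  | zero => rfl
  | succ m =>
    have hinit : ∑ j ∈ range m, pathRDF (m + 1) j = ∑ j ∈ range m, if j % 3 = 1 then 2 else 0 :=
      sum_congr rfl fun j hj => by
        have : j ≠ m := by rw [mem_range] at hj; omega
        simp [pathRDF, this]
    rw [sum_range_succ, hinit, hperiodic]
    unfold pathRDF; split_ifs <;> omega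

lemma exists_pathRDF_eq_two_of_eq_zero {m j : ℕ} (hj : j < m) (h0 : pathRDF m j = 0) :
    ∃ i < m, (i = j + 1 ∨ j = i + 1) ∧ pathRDF m i = 2 := by
  unfold pathRDF at h0
  split_ifs at h0 with h1 h2
  by_cases h3 : j % 3 = 0
  · exact ⟨j + 1, by omega, Or.inl rfl, if_pos (by omega)⟩
  · exact ⟨j - 1, by omega, Or.inr (by omega), if_pos (by omega)⟩

def twoPathRDF (N m j : ℕ) : ℕ :=
  if j < m then pathRDF m j else pathRDF (N - m) (j - m)

lemma twoPathRDF_le_two (N m j : ℕ) : twoPathRDF N m j ≤ 2 := by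
  unfold twoPathRDF; split_ifs <;> apply pathRDF_le_two

lemma sum_range_twoPathRDF {N m : ℕ} (hm : m ≤ N) :
    ∑ j ∈ range N, twoPathRDF N m j = (2 * m + 2) / 3 + (2 * (N - m) + 2) / 3 := by
  obtain ⟨k, rfl⟩ := Nat.exists_eq_add_of_le hm
  rw [sum_range_add, Nat.add_sub_cancel_left, ← sum_range_pathRDF, ← sum_range_pathRDF]
  congr 1 <;> refine sum_congr rfl fun j hj => ?_ <;> rw [mem_range] at hj <;> simp [twoPathRDF, hj]

lemma exists_twoPathRDF_eq_two_of_eq_zero {N m j : ℕ} (hm : m ≤ N) (hj : j < N)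
    (h0 : twoPathRDF N m j = 0) :
    ∃ i < N, (i = j + 1 ∧ i ≠ m ∨ j = i + 1 ∧ j ≠ m) ∧ twoPathRDF N m i = 2 := by
  unfold twoPathRDF at h0 ⊢
  split_ifs at h0 with hjm
  · obtain ⟨i, hi, hij, h2⟩ := exists_pathRDF_eq_two_of_eq_zero hjm h0
    exact ⟨i, by omega, by omega, by rwa [if_pos hi]⟩
  · obtain ⟨i, hi, hij, h2⟩ := exists_pathRDF_eq_two_of_eq_zero (by omega) h0
    exact ⟨m + i, by omega, by omega, by rwa [if_neg (by omega), Nat.add_sub_cancel_left]⟩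

section Cycle

variable {n : ℕ}

def cycleEdge (a : Fin (n + 1)) : Sym2 (Fin (n + 1)) := s(a, a + 1)

lemma cycleGraph_adj_iff (hn : 1 ≤ n) {u v : Fin (n + 1)} :
    (cycleGraph (n + 1)).Adj u v ↔ v = u + 1 ∨ u = v + 1 := by
  obtain ⟨k, rfl⟩ : ∃ k, n = k + 1 := ⟨n - 1, by omega⟩
  rw [cycleGraph_adj, sub_eq_iff_eq_add', sub_eq_iff_eq_add', or_comm]

lemma cycleEdge_mem_edgeSet (hn : 1 ≤ n) (a : Fin (n + 1)) :
    cycleEdge a ∈ (cycleGraph (n + 1)).edgeSet :=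
  (cycleGraph_adj_iff hn).2 (Or.inl rfl)

lemma exists_eq_cycleEdge (hn : 1 ≤ n) {e : Sym2 (Fin (n + 1))}
    (he : e ∈ (cycleGraph (n + 1)).edgeSet) : ∃ a, e = cycleEdge a := by
  induction e using Sym2.ind with | h u v => ?_
  rw [mem_edgeSet] at he
  rcases (cycleGraph_adj_iff hn).1 he with rfl | rfl
  · exact ⟨u, rfl⟩
  · exact ⟨v, Sym2.eq_swap⟩

lemma cycleEdge_injective (hn : 2 ≤ n) : Function.Injective (cycleEdge (n := n)) := by
  intro a b h
  rcases Sym2.eq_iff.1 h with ⟨hab, -⟩ | ⟨hab, hba⟩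
  · exact hab
  · simp only [Fin.ext_iff, Fin.val_add_one, Fin.val_last] at hab hba
    split_ifs at hab hba <;> omega

lemma degree_le_two_of_le_cycleGraph {G : SimpleGraph (Fin (n + 1))} [DecidableRel G.Adj]
    (hn : 1 ≤ n) (h : G ≤ cycleGraph (n + 1)) (v : Fin (n + 1)) : G.degree v ≤ 2 := by
  obtain ⟨k, rfl⟩ : ∃ k, n = k + 1 := ⟨n - 1, by omega⟩
  exact (degree_le_of_le h).trans (cycleGraph_degree_two_le ▸ card_le_two)

def cycleGraphRotate (d : Fin (n + 1)) : cycleGraph (n + 1) ≃g cycleGraph (n + 1) where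
  toEquiv := Equiv.addRight d
  map_rel_iff' := by simp [cycleGraph_adj']

lemma map_cycleGraphRotate_cycleEdge (d a : Fin (n + 1)) :
    Sym2.map (cycleGraphRotate d) (cycleEdge a) = cycleEdge (a + d) := by
  simp [cycleGraphRotate, cycleEdge, add_right_comm]

lemma adj_cycleGraph_deleteEdges_of_val_eq_succ (hn : 2 ≤ n) (a : Fin (n + 1))
    {u w : Fin (n + 1)} (huw : w.val = u.val + 1) (hwa : w.val ≠ a.val + 1) :
    ((cycleGraph (n + 1)).deleteEdges {cycleEdge (Fin.last n), cycleEdge a}).Adj u w := by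
  have := a.isLt
  have := w.isLt
  rw [deleteEdges_adj, cycleGraph_adj_iff (by omega)]
  simp only [Set.mem_insert_iff, Set.mem_singleton_iff, cycleEdge, Sym2.eq_iff, Fin.ext_iff,
    Fin.val_add_one, Fin.val_last]
  split_ifs <;> omega

/-- Deleting `cycleEdge (Fin.last n)` and `cycleEdge a` leaves the paths `0, …, a` and
`a + 1, …, n`. -/
lemma isRDF_twoPathRDF (hn : 2 ≤ n) (a : Fin (n + 1)) :
    IsRDF ((cycleGraph (n + 1)).deleteEdges {cycleEdge (Fin.last n), cycleEdge a})
      fun v => twoPathRDF (n + 1) (a + 1) v := by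
  refine ⟨fun v => twoPathRDF_le_two _ _ _, fun v hv => ?_⟩
  obtain ⟨i, hi, hiv, h2⟩ := exists_twoPathRDF_eq_two_of_eq_zero a.isLt v.isLt hv
  refine ⟨⟨i, hi⟩, ?_, h2⟩
  rcases hiv with ⟨hiv, hia⟩ | ⟨hvi, hva⟩
  · exact adj_cycleGraph_deleteEdges_of_val_eq_succ hn a hiv hia
  · exact (adj_cycleGraph_deleteEdges_of_val_eq_succ hn a hvi hva).symm

lemma romanDom_cycleGraph_deleteEdges_last_le (hn : 2 ≤ n) (a : Fin (n + 1)) :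
    romanDom ((cycleGraph (n + 1)).deleteEdges {cycleEdge (Fin.last n), cycleEdge a}) ≤
      (2 * ((a : ℕ) + 1) + 2) / 3 + (2 * (n - a) + 2) / 3 := by
  refine (romanDom_le_sum (isRDF_twoPathRDF hn a)).trans_eq ?_
  rw [Fin.sum_univ_eq_sum_range (twoPathRDF (n + 1) (a + 1)), sum_range_twoPathRDF a.isLt,
    Nat.add_sub_add_right]

lemma romanDom_cycleGraph_deleteEdges_pair_eq (i j : Fin (n + 1)) :
    romanDom ((cycleGraph (n + 1)).deleteEdges {cycleEdge i, cycleEdge j}) =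
      romanDom ((cycleGraph (n + 1)).deleteEdges
        {cycleEdge (Fin.last n), cycleEdge (j + (Fin.last n - i))}) := by
  rw [romanDom_congr ((cycleGraphRotate (Fin.last n - i)).deleteEdges _), Set.image_pair,
    map_cycleGraphRotate_cycleEdge, map_cycleGraphRotate_cycleEdge, add_sub_cancel]

lemma isAdjClosed_Iic (hn : 1 ≤ n) {a : Fin (n + 1)} {B : Set (Sym2 (Fin (n + 1)))}
    (hlast : cycleEdge (Fin.last n) ∈ B) (haB : cycleEdge a ∈ B) :
    IsAdjClosed ((cycleGraph (n + 1)).deleteEdges B) (Iic a) := by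
  intro v u hv hvu
  rw [deleteEdges_adj, cycleGraph_adj_iff hn] at hvu
  rw [mem_Iic] at hv ⊢
  obtain ⟨rfl | rfl, hB⟩ := hvu
  · exact Fin.add_one_le_of_lt (hv.lt_of_ne (by rintro rfl; exact hB haB))
  · rw [Sym2.eq_swap] at hB
    have hu : u ≠ Fin.last n := by rintro rfl; exact hB hlast
    exact (Fin.lt_add_one_iff.2 (Fin.lt_last_iff_ne_last.2 hu)).le.trans hv

lemma lt_romanDom_cycleGraph_deleteEdges_last_one (hn : 2 ≤ n) (hmod : (n + 1) % 3 ≠ 2) :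
    (2 * (n + 1) + 2) / 3 <
      romanDom ((cycleGraph (n + 1)).deleteEdges {cycleEdge (Fin.last n), cycleEdge 1}) := by
  classical
  have h1v : ((1 : Fin (n + 1)) : ℕ) = 1 := Nat.mod_eq_of_lt (show 1 < n + 1 by omega)
  set H := (cycleGraph (n + 1)).deleteEdges {cycleEdge (Fin.last n), cycleEdge 1}
  obtain ⟨f, hf, hsum⟩ := exists_isRDF_sum_eq_romanDom H
  have hdeg : ∀ v, H.degree v ≤ 2 := degree_le_two_of_le_cycleGraph (by omega) (deleteEdges_le _)
  have hI1 : IsAdjClosed H (Iic 1) := isAdjClosed_Iic (by omega) (by simp) (by simp)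
  have h1 := hf.add_sum_le_sum_of_subset hdeg (isAdjClosed_empty _) hI1 (empty_subset _)
  have h2 := hf.add_sum_le_sum_of_subset hdeg hI1 (isAdjClosed_univ _) (subset_univ _)
  simp only [Fin.card_Iic, card_empty, sum_empty, card_univ, Fintype.card_fin, h1v] at h1 h2
  rcases (by omega : (n + 1) % 3 = 0 ∨ (n + 1) % 3 = 1) with h | h <;> omega

lemma lt_romanDom_cycleGraph_deleteEdges_last_one_three (hn : 4 ≤ n) :
    (2 * (n + 1) + 2) / 3 < romanDom ((cycleGraph (n + 1)).deleteEdges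
      {cycleEdge (Fin.last n), cycleEdge 1, cycleEdge 3}) := by
  classical
  have h1v : ((1 : Fin (n + 1)) : ℕ) = 1 := Nat.mod_eq_of_lt (show 1 < n + 1 by omega)
  have h3v : ((3 : Fin (n + 1)) : ℕ) = 3 := Nat.mod_eq_of_lt (show 3 < n + 1 by omega)
  set H := (cycleGraph (n + 1)).deleteEdges {cycleEdge (Fin.last n), cycleEdge 1, cycleEdge 3}
  obtain ⟨f, hf, hsum⟩ := exists_isRDF_sum_eq_romanDom H
  have hdeg : ∀ v, H.degree v ≤ 2 := degree_le_two_of_le_cycleGraph (by omega) (deleteEdges_le _)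
  have hI1 : IsAdjClosed H (Iic 1) := isAdjClosed_Iic (by omega) (by simp) (by simp)
  have hI3 : IsAdjClosed H (Iic 3) := isAdjClosed_Iic (by omega) (by simp) (by simp)
  have h1 := hf.add_sum_le_sum_of_subset hdeg (isAdjClosed_empty _) hI1 (empty_subset _)
  have h3 := hf.add_sum_le_sum_of_subset hdeg hI1 hI3
    (Iic_subset_Iic.2 (Fin.le_iff_val_le_val.2 (by omega)))
  have h4 := hf.add_sum_le_sum_of_subset hdeg hI3 (isAdjClosed_univ _) (subset_univ _)
  simp only [Fin.card_Iic, card_empty, sum_empty, card_univ, Fintype.card_fin, h1v, h3v]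
    at h1 h3 h4
  rcases (by omega : (n + 1) % 3 = 0 ∨ (n + 1) % 3 = 1 ∨ (n + 1) % 3 = 2) with h | h | h <;> omega

lemma ncard_cycleEdge_last_one (hn : 2 ≤ n) :
    ({cycleEdge (Fin.last n), cycleEdge 1} : Set (Sym2 (Fin (n + 1)))).ncard = 2 := by
  refine Set.ncard_pair ((cycleEdge_injective hn).ne (Fin.ne_of_val_ne ?_))
  rw [Fin.val_last, Fin.val_one', Nat.mod_eq_of_lt (by omega)]
  omega

lemma ncard_cycleEdge_last_one_three (hn : 4 ≤ n) :
    ({cycleEdge (Fin.last n), cycleEdge 1, cycleEdge 3} : Set (Sym2 (Fin (n + 1)))).ncard = 3 := by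
  have h1v : ((1 : Fin (n + 1)) : ℕ) = 1 := Nat.mod_eq_of_lt (show 1 < n + 1 by omega)
  have h3v : ((3 : Fin (n + 1)) : ℕ) = 3 := Nat.mod_eq_of_lt (show 3 < n + 1 by omega)
  have hne {a b : Fin (n + 1)} (h : a.val ≠ b.val) : cycleEdge a ≠ cycleEdge b :=
    (cycleEdge_injective (by omega)).ne (Fin.ne_of_val_ne h)
  rw [Set.ncard_insert_of_notMem, Set.ncard_pair (hne (by omega))]
  simp only [Set.mem_insert_iff, Set.mem_singleton_iff, not_or]
  exact ⟨hne (by simp only [Fin.val_last, h1v]; omega),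
    hne (by simp only [Fin.val_last, h3v]; omega)⟩

lemma romanDom_cycleGraph_deleteEdges_le (hn : 2 ≤ n) {B : Set (Sym2 (Fin (n + 1)))}
    (hB : B ⊆ (cycleGraph (n + 1)).edgeSet) (hcard : B.ncard ≤ 2)
    (hmod : B.ncard = 2 → (n + 1) % 3 = 2) :
    romanDom ((cycleGraph (n + 1)).deleteEdges B) ≤ (2 * (n + 1) + 2) / 3 := by
  obtain ⟨_, hi, _, hj, hBij, hij⟩ :=
    Set.exists_subset_pair_of_ncard_le_two hB (cycleEdge_mem_edgeSet (by omega) 0) hcard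
  obtain ⟨i, rfl⟩ := exists_eq_cycleEdge (by omega) hi
  obtain ⟨j, rfl⟩ := exists_eq_cycleEdge (by omega) hj
  have ha : B.ncard ≤ 1 → ((j + (Fin.last n - i) : Fin (n + 1)) : ℕ) = n := fun h => by
    rw [← cycleEdge_injective hn (hij h), add_sub_cancel, Fin.val_last]
  set a := j + (Fin.last n - i)
  calc romanDom ((cycleGraph (n + 1)).deleteEdges B)
      ≤ romanDom ((cycleGraph (n + 1)).deleteEdges {cycleEdge i, cycleEdge j}) :=
        romanDom_anti (deleteEdges_anti hBij)
    _ = romanDom ((cycleGraph (n + 1)).deleteEdges {cycleEdge (Fin.last n), cycleEdge a}) :=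
        romanDom_cycleGraph_deleteEdges_pair_eq i j
    _ ≤ (2 * ((a : ℕ) + 1) + 2) / 3 + (2 * (n - a) + 2) / 3 :=
        romanDom_cycleGraph_deleteEdges_last_le hn a
    _ ≤ (2 * (n + 1) + 2) / 3 := by
        have := a.isLt
        rcases (by omega : B.ncard ≤ 1 ∨ B.ncard = 2) with h | h
        · have := ha h
          omega
        · have := hmod h
          omega

lemma romanDom_cycleGraph (hn : 2 ≤ n) : romanDom (cycleGraph (n + 1)) = (2 * (n + 1) + 2) / 3 := by
  classical
  refine le_antisymm ?_ ?_
  · simpa using romanDom_cycleGraph_deleteEdges_le hn (Set.empty_subset _) (by simp) (by simp)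
  · simpa using le_romanDom_of_degree_le_two (degree_le_two_of_le_cycleGraph (by omega) le_rfl)

end Cycle

theorem stmt11 (n : ℕ) (hn : 3 ≤ n) :
    romanBondage (SimpleGraph.cycleGraph n) = if n % 3 = 2 then 3 else 2 := by
  obtain ⟨n, rfl⟩ : ∃ k, n = k + 1 := ⟨n - 1, by omega⟩
  replace hn : 2 ≤ n := by omega
  split_ifs with hmod
  · refine romanBondage_eq_of ⟨_, ?_, ?_, ncard_cycleEdge_last_one_three (by omega)⟩
      fun B hB hcard => ?_
    · rintro _ (rfl | rfl | rfl) <;> exact cycleEdge_mem_edgeSet (by omega) _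
    · exact romanDom_cycleGraph hn ▸ lt_romanDom_cycleGraph_deleteEdges_last_one_three (by omega)
    · exact romanDom_cycleGraph hn ▸
        romanDom_cycleGraph_deleteEdges_le hn hB (by omega) fun _ => hmod
  · refine romanBondage_eq_of ⟨_, ?_, ?_, ncard_cycleEdge_last_one hn⟩ fun B hB hcard => ?_
    · rintro _ (rfl | rfl) <;> exact cycleEdge_mem_edgeSet (by omega) _
    · exact romanDom_cycleGraph hn ▸ lt_romanDom_cycleGraph_deleteEdges_last_one hn hmod
    · exact romanDom_cycleGraph hn ▸
        romanDom_cycleGraph_deleteEdges_le hn hB (by omega) (by omega)
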